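/- Let S_j for j = 2,…,s denote the matrix Σ_{k=2}^{j} R_k Q_{k,k}^{-1} R_k^* padded with zeros to size N_j, where R_k = (Q_{1,k}; …; Q_{k-1,k}). Then the final accumulated operator S_s equals the sGS operator U D^{-1} U^*. -/

import Mathlib

open Matrix

/-- The part of `U` supported on block column `k` (blocks given by `β`).
Then `Ucol β U k * D⁻¹ * (Ucol β U k)ᵀ` is exactly the padded matrix
`diag(R_k Q_{k,k}⁻¹ R_k^*, 0)`. -/
def Ucol {N s : ℕ} (β : Fin N → Fin s) (U : Matrix (Fin N) (Fin N) ℝ) (k : Fin s) :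
    Matrix (Fin N) (Fin N) ℝ :=
  Matrix.of fun i l => if β l = k then U i l else 0

/-! The block-diagonal part `D` commutes with the orthogonal projections `P_k` onto the
coordinates of block `k`, hence so does `D⁻¹`. Writing `Ucol k = U P_k`, each summand is
`U D⁻¹ P_k Uᵀ`; these add up to `U D⁻¹ Uᵀ` because `∑ P_k = 1`, and the summand for the
first block vanishes since `U` is strictly upper block-triangular. -/

namespace Matrix

variable {n ι R : Type*} [DecidableEq n] [CommRing R] [DecidableEq ι]

def blockProj (β : n → ι) (k : ι) : Matrix n n R :=
  diagonal fun i => if β i = k then 1 else 0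

variable (β : n → ι)

theorem transpose_blockProj (k : ι) : (blockProj β k : Matrix n n R)ᵀ = blockProj β k :=
  diagonal_transpose _

theorem sum_blockProj [Fintype ι] : ∑ k, (blockProj β k : Matrix n n R) = 1 := by
  ext i j
  simp [blockProj, Matrix.sum_apply, diagonal_apply, one_apply]

variable [Fintype n]

theorem blockProj_mul_self (k : ι) :
    (blockProj β k : Matrix n n R) * blockProj β k = blockProj β k := by
  rw [blockProj, diagonal_mul_diagonal]
  congr 1
  funext i
  by_cases h : β i = k <;> simp [h]

theorem commute_blockProj_of_block_diagonal {D : Matrix n n R}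
    (hD : ∀ i j, β i ≠ β j → D i j = 0) (k : ι) : Commute (blockProj β k) D := by
  ext i j
  by_cases hij : β i = β j
  · simp [blockProj, diagonal_mul, mul_diagonal, hij]
  · simp [blockProj, diagonal_mul, mul_diagonal, hD i j hij]

theorem commute_blockProj_inv_of_block_diagonal {D : Matrix n n R}
    (hD : ∀ i j, β i ≠ β j → D i j = 0) (k : ι) : Commute (blockProj β k) D⁻¹ := by
  simpa only [zpow_neg_one] using
    Commute.zpow_right (commute_blockProj_of_block_diagonal β hD k) (-1)

theorem sum_mul_blockProj_mul_transpose [Fintype ι] (A B M : Matrix n n R)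
    (hM : ∀ k, Commute (blockProj β k) M) :
    ∑ k, A * blockProj β k * M * (B * blockProj β k)ᵀ = A * M * Bᵀ := by
  have hterm (k : ι) :
      A * blockProj β k * M * (B * blockProj β k)ᵀ = A * M * blockProj β k * Bᵀ :=
    calc A * blockProj β k * M * (B * blockProj β k)ᵀ
        = A * (blockProj β k * M) * blockProj β k * Bᵀ := by
          simp only [transpose_mul, transpose_blockProj, Matrix.mul_assoc]
      _ = A * M * (blockProj β k * blockProj β k) * Bᵀ := by
          rw [(hM k).eq]; simp only [Matrix.mul_assoc]
      _ = A * M * blockProj β k * Bᵀ := by rw [blockProj_mul_self]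
  simp only [hterm, ← Finset.sum_mul, ← Matrix.mul_sum, sum_blockProj, Matrix.mul_one]

theorem mul_blockProj_of_isMin [Preorder ι] {U : Matrix n n R}
    (hU : ∀ i j, ¬ β i < β j → U i j = 0) {k : ι} (hk : IsMin k) :
    U * blockProj β k = 0 := by
  ext i j
  by_cases hj : β j = k
  · simp [blockProj, mul_diagonal, hU i j (hj ▸ hk.not_lt)]
  · simp [blockProj, mul_diagonal, hj]

end Matrix

theorem Ucol_eq_mul_blockProj {N s : ℕ} (β : Fin N → Fin s) (U : Matrix (Fin N) (Fin N) ℝ)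
    (k : Fin s) : Ucol β U k = U * blockProj β k := by
  ext i l
  simp [Ucol, blockProj, mul_diagonal]

theorem stmt11 {N s : ℕ} (hs : 2 ≤ s) (β : Fin N → Fin s)
    (D U : Matrix (Fin N) (Fin N) ℝ)
    (hDblock : ∀ i j, β i ≠ β j → D i j = 0)
    (hUupper : ∀ i j, ¬ β i < β j → U i j = 0) :
    ∑ k ∈ Finset.univ.erase (⟨0, by omega⟩ : Fin s),
        Ucol β U k * D⁻¹ * (Ucol β U k)ᵀ = U * D⁻¹ * Uᵀ := by
  have hfirst : Ucol β U ⟨0, by omega⟩ = 0 := by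
    rw [Ucol_eq_mul_blockProj]
    exact mul_blockProj_of_isMin β hUupper fun _ _ => Nat.zero_le _
  have hDinv := commute_blockProj_inv_of_block_diagonal β hDblock
  rw [Finset.sum_erase _ (by rw [hfirst, Matrix.zero_mul, Matrix.zero_mul]),
    ← sum_mul_blockProj_mul_transpose β U U D⁻¹ hDinv]
  simp only [Ucol_eq_mul_blockProj]
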